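/- Let m ∈ ℕ and let D := {z ∈ ℂ⁻ : |z| < 1/exp_m(1)}. Then: (i) for every z ∈ D and every j ∈ {0,…,m}, log^{[j]}(−log z) ∈ ℂ⁻; (ii) for every z ∈ D with z a positive real number, log^{[m]}(−log z) is a positive real number; (iii) the map z ↦ log^{[m]}(−log z) is holomorphic on D. (Remark 5.71 of the paper.) -/

import Mathlib

/-- The `j`-fold iterate `log^{[j]}` of the principal complex logarithm. -/
noncomputable def logIter : ℕ → ℂ → ℂ
  | 0, w => w
  | j + 1, w => Complex.log (logIter j w)

/-- The `j`-fold iterated real exponential `exp_j`. -/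
noncomputable def expIter : ℕ → ℝ → ℝ
  | 0, x => x
  | j + 1, x => Real.exp (expIter j x)

/-!
Since `Re (log w) = log ‖w‖ ≥ log (Re w)`, the logarithm maps the half-plane `Re w > exp b` into
`Re w > b`, and it maps real numbers `> exp b` to real numbers `> b`. For `‖z‖ < 1 / exp_m 1` we have
`Re (-log z) = -log ‖z‖ > log (exp_m 1) = exp_m 0`, so the first `m` logarithms of `-log z` stay in
the right half-plane `Re w > 0 ⊆ ℂ⁻`, where `log` is holomorphic.
-/

open Complex Set

lemma expIter_succ' (j : ℕ) (x : ℝ) : expIter (j + 1) x = expIter j (Real.exp x) := by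
  induction j with
  | zero => rfl
  | succ j ih => rw [expIter, ih, expIter]

lemma log_expIter_one (m : ℕ) : Real.log (expIter m 1) = expIter m 0 := by
  rw [← Real.exp_zero, ← expIter_succ', expIter, Real.log_exp]

lemma expIter_nonneg {x : ℝ} (hx : 0 ≤ x) (k : ℕ) : 0 ≤ expIter k x := by
  cases k with
  | zero => exact hx
  | succ k => exact (Real.exp_pos _).le

lemma Complex.mapsTo_log_exp_lt_re (b : ℝ) :
    MapsTo log {w : ℂ | Real.exp b < w.re} {w : ℂ | b < w.re} := fun w (hw : Real.exp b < w.re) =>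
  calc b < Real.log w.re := (Real.lt_log_iff_exp_lt ((Real.exp_pos b).trans hw)).2 hw
    _ ≤ Real.log ‖w‖ := Real.log_le_log ((Real.exp_pos b).trans hw) (re_le_norm w)
    _ = (log w).re := (log_re w).symm

lemma Complex.mapsTo_log_ofReal_Ioi (b : ℝ) :
    MapsTo log (ofReal '' Ioi (Real.exp b)) (ofReal '' Ioi b) := by
  rintro _ ⟨y, hy, rfl⟩
  have hy : Real.exp b < y := hy
  exact ⟨Real.log y, (Real.lt_log_iff_exp_lt ((Real.exp_pos b).trans hy)).2 hy,
    ofReal_log ((Real.exp_pos b).trans hy).le⟩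

lemma mapsTo_logIter {S : ℕ → Set ℂ} (hS : ∀ k, MapsTo log (S (k + 1)) (S k)) (j k : ℕ) :
    MapsTo (logIter j) (S (j + k)) (S k) := by
  induction j generalizing k with
  | zero => rw [Nat.zero_add]; exact fun w hw => hw
  | succ j ih =>
    intro w hw
    exact hS k (ih (k + 1) (by rwa [← Nat.add_assoc, Nat.add_right_comm]))

lemma expIter_zero_lt_re_neg_log {m : ℕ} {z : ℂ} (hz : z ≠ 0) (hlt : ‖z‖ < 1 / expIter m 1) :
    expIter m 0 < (-log z).re := by
  have h := Real.log_lt_log (norm_pos_iff.2 hz) hlt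
  rw [one_div, Real.log_inv, log_expIter_one] at h
  rw [neg_re, log_re]
  linarith

lemma DifferentiableOn.logIter {f : ℂ → ℂ} {s : Set ℂ} (hf : DifferentiableOn ℂ f s) (n : ℕ)
    (hslit : ∀ z ∈ s, ∀ j < n, logIter j (f z) ∈ slitPlane) :
    DifferentiableOn ℂ (fun z => logIter n (f z)) s := by
  induction n with
  | zero => exact hf
  | succ n ih =>
    exact (ih fun z hz j hj => hslit z hz j (by omega)).clog fun z hz => hslit z hz n n.lt_succ_self

/-- **Remark 5.71**: let `m ∈ ℕ` and `D := {z ∈ ℂ⁻ : |z| < 1 / exp_m 1}` (where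
`ℂ⁻ = ℂ ∖ ℝ_{≤0}` is the slit plane). Then (i) for every `z ∈ D` and every
`j ∈ {0,…,m}`, `log^{[j]} (-log z) ∈ ℂ⁻`; (ii) for every positive real `z ∈ D`,
`log^{[m]} (-log z)` is a positive real; (iii) `z ↦ log^{[m]} (-log z)` is
holomorphic on `D`. -/
theorem logIter_neg_log_mem_slitPlane (m : ℕ) :
    (∀ z ∈ {w : ℂ | w ∈ Complex.slitPlane ∧ ‖w‖ < 1 / expIter m 1},
      ∀ j ≤ m, logIter j (-Complex.log z) ∈ Complex.slitPlane) ∧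
    (∀ x : ℝ, 0 < x →
      ((x : ℂ)) ∈ {w : ℂ | w ∈ Complex.slitPlane ∧ ‖w‖ < 1 / expIter m 1} →
      ∃ y : ℝ, 0 < y ∧ logIter m (-Complex.log (x : ℂ)) = (y : ℂ)) ∧
    DifferentiableOn ℂ (fun z => logIter m (-Complex.log z))
      {w : ℂ | w ∈ Complex.slitPlane ∧ ‖w‖ < 1 / expIter m 1} := by
  have hslit : ∀ z ∈ {w : ℂ | w ∈ slitPlane ∧ ‖w‖ < 1 / expIter m 1},
      ∀ j ≤ m, logIter j (-log z) ∈ slitPlane := by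
    rintro z ⟨hz, hlt⟩ j hj
    obtain ⟨k, rfl⟩ := Nat.exists_eq_add_of_le hj
    have hre := mapsTo_logIter (S := fun k => {w : ℂ | expIter k 0 < w.re})
      (fun k => mapsTo_log_exp_lt_re _) j k (expIter_zero_lt_re_neg_log (slitPlane_ne_zero hz) hlt)
    exact mem_slitPlane_iff.2 (Or.inl ((expIter_nonneg le_rfl k).trans_lt hre))
  refine ⟨hslit, fun x hx hmem => ?_, ?_⟩
  · have hneg : -log (x : ℂ) ∈ ofReal '' Ioi (expIter m 0) := by
      refine ⟨-Real.log x, ?_, by rw [ofReal_neg, ofReal_log hx.le]⟩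
      simpa [← ofReal_log hx.le] using expIter_zero_lt_re_neg_log (slitPlane_ne_zero hmem.1) hmem.2
    obtain ⟨y, hy, hxy⟩ := mapsTo_logIter (S := fun k => ofReal '' Ioi (expIter k 0))
      (fun k => mapsTo_log_ofReal_Ioi _) m 0 hneg
    exact ⟨y, hy, hxy.symm⟩
  · exact (differentiableOn_id.clog fun w hw => hw.1).neg.logIter m
      fun z hz j hj => hslit z hz j hj.le
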